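/- arXiv:2601.17922 — 4 statements merged into one kernel-verified Lean document; each statement's English description precedes it below -/
import Mathlib

section
/- For finite subsets A, B of an abelian group G and any z ∈ G, letting A(z) := A ∪ (z + B) and B(z) := A ∩ (z + B), we have |A(z)| + |B(z)| = |A| + |B|, and for every g ∈ G, r_{A, z+B}(g) = r_{A(z), B(z)}(g) + r_{A \ (z+B), (z+B) \ A}(g); in particular A(z) +_i B(z) ⊆ z + (A +_i B) for every i ≥ 1. -/
/-!
Partition the representations `g = x + y` with `x ∈ A`, `y ∈ C := z + B` by whether `y ∈ A` and
whether `x ∈ C`. Those with `y ∈ A` are the representations from `A × (A ∩ C)`; those with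
`x ∈ A ∩ C`, `y ∈ C \ A` correspond, after swapping the summands, to the representations from
`(C \ A) × (A ∩ C)`, which together with `A × (A ∩ C)` make up `A(z) × B(z)`; the rest come from
`(A \ C) × (C \ A)`. Hence `r_{A,C} ≥ r_{A(z),B(z)}`, and translating by `z` gives the inclusion.
-/

open Finset
open scoped Pointwise

def rAB {G : Type*} [AddCommGroup G] [DecidableEq G] (A B : Finset G) (g : G) : ℕ :=
  ((A ×ˢ B).filter (fun p => p.1 + p.2 = g)).card

def popSum {G : Type*} [AddCommGroup G] [DecidableEq G] (A B : Finset G) (i : ℕ) : Finset G :=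
  (A + B).filter (fun g => i ≤ rAB A B g)

section Representations

variable {G : Type*} [AddCommGroup G] [DecidableEq G]

theorem rAB_comm (A B : Finset G) (g : G) : rAB A B g = rAB B A g := by
  unfold rAB
  refine card_nbij' Prod.swap Prod.swap ?_ ?_ (fun p _ => p.swap_swap) (fun p _ => p.swap_swap) <;>
  · rintro ⟨x, y⟩
    simp [and_comm, add_comm]

theorem rAB_union_left {A A' : Finset G} (h : Disjoint A A') (B : Finset G) (g : G) :
    rAB (A ∪ A') B g = rAB A B g + rAB A' B g := by
  unfold rAB
  rw [union_product, filter_union, card_union_of_disjoint]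
  exact disjoint_filter_filter (disjoint_product.2 (Or.inl h))

theorem rAB_union_right (A : Finset G) {B B' : Finset G} (h : Disjoint B B') (g : G) :
    rAB A (B ∪ B') g = rAB A B g + rAB A B' g := by
  rw [rAB_comm, rAB_union_left h, rAB_comm B, rAB_comm B']

theorem rAB_eq_rAB_union_inter_add_rAB_sdiff (A C : Finset G) (g : G) :
    rAB A C g = rAB (A ∪ C) (A ∩ C) g + rAB (A \ C) (C \ A) g := by
  have hA := rAB_union_left (disjoint_sdiff_inter A C) (C \ A) g
  rw [sdiff_union_inter] at hA
  have hC := rAB_union_right A (disjoint_sdiff_inter C A) g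
  rw [sdiff_union_inter, inter_comm] at hC
  have hAC : rAB (A ∪ C) (A ∩ C) g = rAB A (A ∩ C) g + rAB (A ∩ C) (C \ A) g := by
    rw [← union_sdiff_self_eq_union, rAB_union_left disjoint_sdiff, rAB_comm (C \ A)]
  omega

theorem rAB_image_add_left (A B : Finset G) (z g : G) :
    rAB A (B.image (z + ·)) (z + g) = rAB A B g := by
  unfold rAB
  refine card_nbij' (fun p => (p.1, -z + p.2)) (fun p => (p.1, z + p.2)) ?_ ?_ ?_ ?_
  · rintro ⟨x, w⟩ hp
    simp only [coe_filter, mem_product, mem_image, Set.mem_ofPred_eq] at hp ⊢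
    obtain ⟨⟨hx, y, hy, rfl⟩, hsum⟩ := hp
    rw [add_left_comm, add_right_inj] at hsum
    simpa using ⟨⟨hx, hy⟩, hsum⟩
  · intro p hp
    simp only [coe_filter, mem_product, mem_image, Set.mem_ofPred_eq] at hp ⊢
    obtain ⟨⟨hx, hy⟩, hsum⟩ := hp
    exact ⟨⟨hx, p.2, hy, rfl⟩, by rw [add_left_comm, hsum]⟩
  · intro p _
    simp
  · intro p _
    simp

theorem mem_add_of_rAB_pos {A B : Finset G} {g : G} (h : 0 < rAB A B g) : g ∈ A + B := by
  obtain ⟨⟨a, b⟩, hab⟩ := card_pos.1 h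
  simp only [mem_filter, mem_product] at hab
  exact hab.2 ▸ add_mem_add hab.1.1 hab.1.2

theorem mem_popSum {A B : Finset G} {i : ℕ} (hi : 1 ≤ i) {g : G} :
    g ∈ popSum A B i ↔ i ≤ rAB A B g :=
  ⟨fun h => (mem_filter.1 h).2, fun h => mem_filter.2 ⟨mem_add_of_rAB_pos (by omega), h⟩⟩

end Representations

/-- Dyson transform: with `A(z) := A ∪ (z + B)` and `B(z) := A ∩ (z + B)`,
we have `|A(z)| + |B(z)| = |A| + |B|`,
`r_{A, z+B}(g) = r_{A(z),B(z)}(g) + r_{A \ (z+B), (z+B) \ A}(g)` for all `g`,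
and `A(z) +_i B(z) ⊆ z + (A +_i B)` for all `i ≥ 1`. -/
theorem dyson_transform {G : Type*} [AddCommGroup G] [DecidableEq G]
    (A B : Finset G) (z : G)
    (Az Bz : Finset G) (hAz : Az = A ∪ B.image (fun b => z + b))
    (hBz : Bz = A ∩ B.image (fun b => z + b)) :
    Az.card + Bz.card = A.card + B.card ∧
    (∀ g : G, rAB A (B.image (fun b => z + b)) g =
        rAB Az Bz g +
          rAB (A \ B.image (fun b => z + b)) (B.image (fun b => z + b) \ A) g) ∧
    (∀ i : ℕ, 1 ≤ i → popSum Az Bz i ⊆ (popSum A B i).image (fun g => z + g)) := by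
  subst hAz hBz
  have hsplit := rAB_eq_rAB_union_inter_add_rAB_sdiff A (B.image (z + ·))
  refine ⟨?_, hsplit, fun i hi g hg => ?_⟩
  · rw [card_union_add_card_inter, card_image_of_injective _ (add_right_injective z)]
  · refine mem_image.2 ⟨-z + g, (mem_popSum hi).2 ?_, add_neg_cancel_left z g⟩
    rw [← rAB_image_add_left A B z, add_neg_cancel_left, hsplit]
    exact ((mem_popSum hi).1 hg).trans le_self_add
end

section
/- Let G be a finite abelian group, A, B ⊆ G subsets with |A| + |B| ≥ |G| + 1, and τ : A → G an injective map. Then the restricted sumset A +^τ B := {a + b : a ∈ A, b ∈ B, b ≠ τ(a)} satisfies |A +^τ B| ≥ |G| + (1 - 4√(3·min{|A|,|B|}))/3. -/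
/-!
Let `T` be the complement of `A +^τ B` and `r = A.addConvolution B` the representation function.
If `t ∈ T`, every representation `t = a + b` has `b = τ a`, so the representations of all the
elements of `T` are pairs `(a, τ a)` with distinct `a` and distinct `τ a`: `∑_T r ≤ min(|A|, |B|)`.
As `r ≥ 1` by pigeonhole, `|T| ≤ min(|A|, |B|)`.

Counting `{b ∈ B | g - b ∉ A}` and `{b ∈ B | h - b ∉ A}` inside `B` gives
`|B| ≤ |Aᶜ ∩ (Aᶜ + (g - h))| + r g + r h` for all `g, h`. On the other hand, if `t` and `t + δ`
both lie in `T` with `δ ≠ 0`, then the first coordinates `a` of the representations of `t` have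
`a + δ ∉ A`; together with `|Aᶜ| < |B|` this makes `T` a Sidon set.

Summing the first inequality over the ordered pairs of distinct elements of `T`, whose differences
are then distinct and nonzero, and using `∑_{δ ≠ 0} |W ∩ (W + δ)| = |W|² - |W|` for `W = Aᶜ`, gives
`(|T| - 1)(|T| - 2) < |B|`, and symmetrically `< |A|`. Together with `|T| ≤ min(|A|, |B|)` this
yields `(3|T| + 1)² ≤ 48 min(|A|, |B|)`, which is the claim since `|A +^τ B| = |G| - |T|`.
-/

open Finset
open scoped Pointwise

/-- The restricted sumset `A +^τ B := {a + b : a ∈ A, b ∈ B, b ≠ τ a}`. -/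
def restrictedSumset {G : Type*} [AddCommGroup G] [DecidableEq G]
    (A B : Finset G) (τ : G → G) : Finset G :=
  ((A ×ˢ B).filter (fun p => p.2 ≠ τ p.1)).image (fun p => p.1 + p.2)

theorem Finset.sum_offDiag_add_sum_diag {α M : Type*} [DecidableEq α] [AddCommMonoid M]
    (s : Finset α) (f : α × α → M) :
    ∑ p ∈ s.offDiag, f p + ∑ x ∈ s, f (x, x) = ∑ p ∈ s ×ˢ s, f p := by
  rw [← sum_diag, add_comm, ← sum_union (disjoint_diag_offDiag s), diag_union_offDiag]

namespace Finset

variable {G : Type*} [AddCommGroup G] [DecidableEq G]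

theorem addConvolution_comm (A B : Finset G) (x : G) :
    A.addConvolution B x = B.addConvolution A x :=
  card_nbij' Prod.swap Prod.swap (by intro p; simp +contextual [add_comm])
    (by intro p; simp +contextual [add_comm]) (fun _ _ => rfl) (fun _ _ => rfl)

theorem card_filter_sub_mem_eq_addConvolution (A B : Finset G) (x : G) :
    #{b ∈ B | x - b ∈ A} = A.addConvolution B x :=
  card_nbij' (fun b => (x - b, b)) Prod.snd (by intro b; simp +contextual)
    (by rintro ⟨a, b⟩ h; obtain ⟨⟨ha, hb⟩, rfl⟩ := (by simpa using h); simp [ha, hb])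
    (fun _ _ => rfl) (by rintro ⟨a, b⟩; simp +contextual [← eq_sub_iff_add_eq])

variable [Fintype G]

theorem sum_card_filter_sub_mem_eq_card_mul_card (W : Finset G) :
    ∑ δ, #{x ∈ W | x - δ ∈ W} = #W * #W := by
  have h δ : #{x ∈ W | x - δ ∈ W} = #{p ∈ W ×ˢ W | p.1 - p.2 = δ} :=
    card_nbij' (fun x => (x, x - δ)) Prod.fst (by intro x; simp +contextual)
      (by rintro ⟨x, y⟩ h; obtain ⟨⟨hx, hy⟩, rfl⟩ := (by simpa using h); simp [hx, hy])
      (fun _ _ => rfl) (by rintro ⟨x, y⟩; simp +contextual [sub_eq_iff_eq_add])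
  simp_rw [h, sum_card_fiberwise_eq_card_filter, mem_univ, filter_true, card_product]

theorem card_add_card_le_card_add_addConvolution (A B : Finset G) (x : G) :
    #A + #B ≤ Fintype.card G + A.addConvolution B x := by
  have himage : #(A.image (x - ·)) = #A := card_image_of_injective _ sub_right_injective
  have hinter : {b ∈ B | x - b ∈ A} = B ∩ A.image (x - ·) := by
    ext b
    simp only [mem_filter, mem_inter, mem_image]
    exact and_congr_right fun _ => ⟨fun h => ⟨_, h, sub_sub_cancel x b⟩,
      by rintro ⟨a, ha, rfl⟩; rwa [sub_sub_cancel]⟩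
  have hunion := card_union_add_card_inter B (A.image (x - ·))
  have huniv := card_le_univ (B ∪ A.image (x - ·))
  rw [← card_filter_sub_mem_eq_addConvolution, hinter]
  omega

theorem card_le_sum_addConvolution {A B : Finset G} (hcard : Fintype.card G + 1 ≤ #A + #B)
    (S : Finset G) : #S ≤ ∑ t ∈ S, A.addConvolution B t := by
  simpa using card_nsmul_le_sum S (A.addConvolution B) 1 fun t _ => by
    have := card_add_card_le_card_add_addConvolution A B t
    omega

theorem card_le_card_filter_sub_mem_compl_add_addConvolution (A B : Finset G) (g h : G) :
    #B ≤ #{x ∈ Aᶜ | x - (g - h) ∈ Aᶜ} + A.addConvolution B g + A.addConvolution B h := by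
  have hg := card_filter_add_card_filter_not (s := B) (fun b => g - b ∈ A)
  have hh := card_filter_add_card_filter_not (s := B) (fun b => h - b ∈ A)
  have hunion : #({b ∈ B | g - b ∉ A} ∪ {b ∈ B | h - b ∉ A}) ≤ #B :=
    card_le_card (union_subset (filter_subset _ _) (filter_subset _ _))
  have hinter :
      #({b ∈ B | g - b ∉ A} ∩ {b ∈ B | h - b ∉ A}) ≤ #{x ∈ Aᶜ | x - (g - h) ∈ Aᶜ} := by
    refine card_le_card_of_injOn (g - ·) (fun b hb => ?_) sub_right_injective.injOn
    simp only [coe_inter, coe_filter, Set.mem_inter_iff, Set.mem_ofPred_eq] at hb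
    simp [hb.1.2, hb.2.2]
  have := card_union_add_card_inter {b ∈ B | g - b ∉ A} {b ∈ B | h - b ∉ A}
  rw [← card_filter_sub_mem_eq_addConvolution, ← card_filter_sub_mem_eq_addConvolution]
  omega

theorem sum_card_filter_sub_mem_offDiag_add_card_le {T W : Finset G}
    (hT : Set.InjOn (fun p : G × G => p.1 - p.2) T.offDiag) :
    ∑ p ∈ T.offDiag, #{x ∈ W | x - (p.1 - p.2) ∈ W} + #W ≤ #W * #W := by
  have hzero : #{x ∈ W | x - 0 ∈ W} = #W := by simp
  have himage : T.offDiag.image (fun p => p.1 - p.2) ⊆ univ.erase 0 := by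
    intro δ hδ
    obtain ⟨p, hp, rfl⟩ := mem_image.1 hδ
    exact mem_erase.2 ⟨sub_ne_zero.2 (mem_offDiag.1 hp).2.2, mem_univ _⟩
  rw [← sum_image (f := fun δ => #{x ∈ W | x - δ ∈ W}) hT,
    ← sum_card_filter_sub_mem_eq_card_mul_card, ← sum_erase_add _ _ (mem_univ 0), hzero]
  exact Nat.add_le_add_right (sum_le_sum_of_subset himage) _

theorem card_sub_one_mul_card_sub_two_lt_of_injOn_sub_offDiag {T W : Finset G} {r : G → ℕ}
    {c : ℕ} (hT : Set.InjOn (fun p : G × G => p.1 - p.2) T.offDiag) (hW : #W < c)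
    (hr : ∑ t ∈ T, r t ≤ c)
    (hc : ∀ g ∈ T, ∀ h ∈ T, g ≠ h → c ≤ #{x ∈ W | x - (g - h) ∈ W} + r g + r h) :
    (#T - 1) * (#T - 2) < c := by
  have hpairs : #T.offDiag * c ≤ ∑ p ∈ T.offDiag,
      (#{x ∈ W | x - (p.1 - p.2) ∈ W} + (r p.1 + r p.2)) := by
    rw [← smul_eq_mul]
    exact card_nsmul_le_sum _ _ _ fun p hp => by
      rw [mem_offDiag] at hp
      simpa only [add_assoc] using hc _ hp.1 _ hp.2.1 hp.2.2
  have hdiag :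
      ∑ p ∈ T.offDiag, (r p.1 + r p.2) + 2 * ∑ t ∈ T, r t = 2 * #T * ∑ t ∈ T, r t := by
    have := sum_offDiag_add_sum_diag T (fun p => r p.1 + r p.2)
    simp only [sum_product, sum_add_distrib, sum_const, smul_eq_mul, ← mul_sum] at this
    rw [sum_add_distrib]
    linarith
  have henergy := sum_card_filter_sub_mem_offDiag_add_card_le (W := W) hT
  rw [sum_add_distrib, offDiag_card] at hpairs
  by_contra! hk
  obtain ⟨m, hm⟩ : ∃ m, #T = m + 2 := ⟨#T - 2, by grind⟩
  rw [hm, Nat.add_sub_cancel, show m + 2 - 1 = m + 1 by omega] at hk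
  rw [hm, show (m + 2) * (m + 2) - (m + 2) = (m + 2) * (m + 1) by grind] at hpairs
  rw [hm] at hdiag
  nlinarith

end Finset

section
variable {G : Type*} [AddCommGroup G] [DecidableEq G] {A B : Finset G} {τ : G → G}

theorem eq_of_add_notMem_restrictedSumset {a b : G} (ha : a ∈ A) (hb : b ∈ B)
    (hab : a + b ∉ restrictedSumset A B τ) : b = τ a := by
  by_contra hne
  exact hab <| mem_image.2 ⟨(a, b), mem_filter.2 ⟨mem_product.2 ⟨ha, hb⟩, hne⟩, rfl⟩

theorem injOn_fst_of_forall_notMem_restrictedSumset {S : Finset G}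
    (hS : ∀ t ∈ S, t ∉ restrictedSumset A B τ) :
    Set.InjOn (Prod.fst : G × G → G) ((A ×ˢ B).filter fun p => p.1 + p.2 ∈ S) := by
  rintro ⟨a, b⟩ hp ⟨a', b'⟩ hp' (rfl : a = a')
  simp only [mem_coe, mem_filter, mem_product] at hp hp'
  exact Prod.ext rfl <| (eq_of_add_notMem_restrictedSumset hp.1.1 hp.1.2 (hS _ hp.2)).trans
    (eq_of_add_notMem_restrictedSumset hp'.1.1 hp'.1.2 (hS _ hp'.2)).symm

theorem sum_addConvolution_le_card_left {S : Finset G}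
    (hS : ∀ t ∈ S, t ∉ restrictedSumset A B τ) : ∑ t ∈ S, A.addConvolution B t ≤ #A :=
  (sum_card_fiberwise_eq_card_filter _ _ _).trans_le <|
    card_le_card_of_injOn Prod.fst (fun _ hp => (mem_product.1 (mem_filter.1 hp).1).1)
      (injOn_fst_of_forall_notMem_restrictedSumset hS)

theorem sum_addConvolution_le_card_right (hτ : Set.InjOn τ A) {S : Finset G}
    (hS : ∀ t ∈ S, t ∉ restrictedSumset A B τ) : ∑ t ∈ S, A.addConvolution B t ≤ #B := by
  refine (sum_card_fiberwise_eq_card_filter _ _ _).trans_le <|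
    card_le_card_of_injOn Prod.snd (fun p hp => (mem_product.1 (mem_filter.1 hp).1).2) ?_
  rintro ⟨a, b⟩ hp ⟨a', b'⟩ hp' (rfl : b = b')
  simp only [mem_coe, mem_filter, mem_product] at hp hp'
  have hb := eq_of_add_notMem_restrictedSumset hp.1.1 hp.1.2 (hS _ hp.2)
  have hb' := eq_of_add_notMem_restrictedSumset hp'.1.1 hp'.1.2 (hS _ hp'.2)
  exact Prod.ext (hτ hp.1.1 hp'.1.1 (hb.symm.trans hb')) rfl

variable [Fintype G]

theorem sum_addConvolution_filter_add_mem_le (hτ : Set.InjOn τ A) {δ : G} (hδ : δ ≠ 0) :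
    ∑ t ∈ (restrictedSumset A B τ)ᶜ with t + δ ∈ (restrictedSumset A B τ)ᶜ,
      A.addConvolution B t ≤ #{x ∈ Aᶜ | x - δ ∉ Aᶜ} := by
  refine (sum_card_fiberwise_eq_card_filter _ _ _).trans_le <|
    card_le_card_of_injOn (·.1 + δ) (fun p hp => ?_) fun p hp q hq hpq =>
      injOn_fst_of_forall_notMem_restrictedSumset (fun t ht => mem_compl.1 (mem_filter.1 ht).1)
        hp hq (add_right_cancel hpq)
  obtain ⟨⟨ha, hb⟩, hbad, hbad'⟩ : (p.1 ∈ A ∧ p.2 ∈ B) ∧ p.1 + p.2 ∉ restrictedSumset A B τ ∧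
      p.1 + p.2 + δ ∉ restrictedSumset A B τ := by simpa using hp
  have hshift : p.1 + δ ∉ A := fun h => hδ <| by
    have := eq_of_add_notMem_restrictedSumset h hb (by rwa [add_right_comm])
    simpa using hτ h ha (this.symm.trans (eq_of_add_notMem_restrictedSumset ha hb hbad))
  simp [hshift, ha]

theorem sum_addConvolution_filter_add_mem_lt (hτ : Set.InjOn τ A)
    (hcard : Fintype.card G + 1 ≤ #A + #B) {g h : G} (hgh : g ≠ h) :
    ∑ t ∈ (restrictedSumset A B τ)ᶜ with t + (g - h) ∈ (restrictedSumset A B τ)ᶜ,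
      A.addConvolution B t < A.addConvolution B g + A.addConvolution B h := by
  have hleave := sum_addConvolution_filter_add_mem_le (B := B) hτ (sub_ne_zero.2 hgh)
  have hstay := card_le_card_filter_sub_mem_compl_add_addConvolution A B g h
  have hsplit := card_filter_add_card_filter_not (s := Aᶜ) (· - (g - h) ∈ Aᶜ)
  have hcompl := card_add_card_compl A
  omega

theorem injOn_sub_offDiag_compl_restrictedSumset (hτ : Set.InjOn τ A)
    (hcard : Fintype.card G + 1 ≤ #A + #B) :
    Set.InjOn (fun p : G × G => p.1 - p.2) (restrictedSumset A B τ)ᶜ.offDiag := by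
  have hmem {u v : G} (hu : u ∈ (restrictedSumset A B τ)ᶜ) (hv : v ∈ (restrictedSumset A B τ)ᶜ) :
      u ∈ (restrictedSumset A B τ)ᶜ.filter (· + (v - u) ∈ (restrictedSumset A B τ)ᶜ) :=
    mem_filter.2 ⟨hu, by rwa [add_sub_cancel]⟩
  rintro ⟨g, h⟩ hgh ⟨s, t⟩ hst (heq : g - h = s - t)
  obtain ⟨hg, hh, hgh⟩ : g ∈ _ ∧ h ∈ _ ∧ g ≠ h := mem_offDiag.1 hgh
  obtain ⟨hs, ht, hst⟩ : s ∈ _ ∧ t ∈ _ ∧ s ≠ t := mem_offDiag.1 hst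
  have hts : h - g = t - s := by rw [← neg_sub, heq, neg_sub]
  by_contra hne
  have hgs : g ≠ s := fun hgs => hne <| by subst hgs; rw [sub_right_injective heq]
  have hht : h ≠ t := fun hht => hne <| by subst hht; rw [sub_left_injective heq]
  -- With `δ = g - h = s - t`, both `h, t` and `g, s` (for `-δ`) stay in `T` under translation,
  -- so the two strict bounds give `r h < r s < r h`.
  have hst_lt := sum_addConvolution_filter_add_mem_lt hτ hcard hst
  have hhg_lt := sum_addConvolution_filter_add_mem_lt hτ hcard (Ne.symm hgh)
  rw [← heq] at hst_lt
  have hht_le := add_le_sum (f := A.addConvolution B) (fun _ _ => Nat.zero_le _) (hmem hh hg)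
    (by rw [heq]; exact hmem ht hs) hht
  have hgs_le := add_le_sum (f := A.addConvolution B) (fun _ _ => Nat.zero_le _) (hmem hg hh)
    (by rw [hts]; exact hmem hs ht) hgs
  omega

theorem card_compl_restrictedSumset_sub_one_mul_sub_two_lt_card_right (hτ : Set.InjOn τ A)
    (hcard : Fintype.card G + 1 ≤ #A + #B) :
    (#(restrictedSumset A B τ)ᶜ - 1) * (#(restrictedSumset A B τ)ᶜ - 2) < #B :=
  card_sub_one_mul_card_sub_two_lt_of_injOn_sub_offDiag (W := Aᶜ)
    (injOn_sub_offDiag_compl_restrictedSumset hτ hcard)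
    (by have := card_add_card_compl A; omega)
    (sum_addConvolution_le_card_right hτ fun _ => mem_compl.1)
    fun g _ h _ _ => card_le_card_filter_sub_mem_compl_add_addConvolution A B g h

theorem card_compl_restrictedSumset_sub_one_mul_sub_two_lt_card_left (hτ : Set.InjOn τ A)
    (hcard : Fintype.card G + 1 ≤ #A + #B) :
    (#(restrictedSumset A B τ)ᶜ - 1) * (#(restrictedSumset A B τ)ᶜ - 2) < #A :=
  card_sub_one_mul_card_sub_two_lt_of_injOn_sub_offDiag (W := Bᶜ)
    (injOn_sub_offDiag_compl_restrictedSumset hτ hcard)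
    (by have := card_add_card_compl B; omega)
    (sum_addConvolution_le_card_left fun _ => mem_compl.1)
    fun g _ h _ _ => by
      simpa only [addConvolution_comm B A] using
        card_le_card_filter_sub_mem_compl_add_addConvolution B A g h

end

theorem sq_three_mul_add_one_le {k m : ℕ} (hkm : k ≤ m) (hk : (k - 1) * (k - 2) < m) :
    (3 * k + 1) ^ 2 ≤ 48 * m := by
  rcases Nat.lt_or_ge k 3 with hk3 | hk3
  · interval_cases k <;> omega
  · obtain ⟨j, rfl⟩ : ∃ j, k = j + 3 := ⟨k - 3, by omega⟩
    rw [show j + 3 - 1 = j + 2 by omega, show j + 3 - 2 = j + 1 by omega] at hk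
    nlinarith

/-- If `|A| + |B| ≥ |G| + 1` and `τ` is injective on `A`, then
`|A +^τ B| ≥ |G| + (1 - 4√(3 · min(|A|,|B|)))/3`. -/
theorem restricted_sumset_lower_bound {G : Type*} [AddCommGroup G] [Fintype G]
    [DecidableEq G] (A B : Finset G) (τ : G → G) (hτ : Set.InjOn τ A)
    (hcard : Fintype.card G + 1 ≤ A.card + B.card) :
    (Fintype.card G : ℝ) +
        (1 - 4 * Real.sqrt (3 * min (A.card : ℝ) (B.card : ℝ))) / 3 ≤
      ((restrictedSumset A B τ).card : ℝ) := by
  set T := (restrictedSumset A B τ)ᶜ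
  have hbad (t : G) (ht : t ∈ T) : t ∉ restrictedSumset A B τ := mem_compl.1 ht
  have hTA := (card_le_sum_addConvolution hcard T).trans (sum_addConvolution_le_card_left hbad)
  have hTB := (card_le_sum_addConvolution hcard T).trans (sum_addConvolution_le_card_right hτ hbad)
  have hsq : (3 * #T + 1) ^ 2 ≤ 16 * (3 * min #A #B) := by
    have := sq_three_mul_add_one_le (le_min hTA hTB)
      (lt_min (card_compl_restrictedSumset_sub_one_mul_sub_two_lt_card_left hτ hcard)
        (card_compl_restrictedSumset_sub_one_mul_sub_two_lt_card_right hτ hcard))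
    omega
  have hsqR : ((3 * #T + 1 : ℕ) : ℝ) ^ 2 ≤ 16 * (3 * min (#A : ℝ) #B) := by
    rw [← Nat.cast_min]
    exact_mod_cast hsq
  have hsqrt := Real.sq_sqrt (by positivity : (0 : ℝ) ≤ 3 * min (#A : ℝ) #B)
  have := Real.sqrt_nonneg (3 * min (#A : ℝ) #B)
  rw [← card_add_card_compl (restrictedSumset A B τ)]
  push_cast at hsqR ⊢
  nlinarith
end

section
/- Let t be a positive integer and G a finite abelian group with subsets A, B satisfying |A| + |B| ≥ |G| + 1, and let τ : A → G be any map. Then t·|A +^τ B| + |τ| ≥ Σ_{i=1}^t |A +_i B|, where |τ| := |{(a,b) ∈ A × B : τ(a) = b}| and A +^τ B := {a + b : a ∈ A, b ∈ B, b ≠ τ(a)}. -/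
open Finset
open scoped Pointwise

/-!
Count `Σ_{i ≤ t} |A +_i B|` by columns: it equals `Σ_g min(t, r(g))`. An element `g` of
`A +^τ B` contributes at most `t`; any other `g` has all of its representations `g = a + b`
with `b = τ a`, so it contributes at most its number of such pairs, and these numbers add up
to `|τ|`.
-/

theorem Finset.sum_Icc_card_filter_le_eq_sum_min {α : Type*} (s : Finset α) (f : α → ℕ)
    (t : ℕ) :
    ∑ i ∈ Icc 1 t, #{x ∈ s | i ≤ f x} = ∑ x ∈ s, min t (f x) := by
  simp_rw [card_filter]
  rw [sum_comm]
  refine sum_congr rfl fun x _ => ?_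
  have hfilter : {i ∈ Icc 1 t | i ≤ f x} = Icc 1 (min t (f x)) := by
    ext i
    simp only [mem_filter, mem_Icc, le_min_iff]
    tauto
  rw [← card_filter, hfilter, Nat.card_Icc, Nat.add_sub_cancel]

section RestrictedSumset

variable {G : Type*} [AddCommGroup G] [DecidableEq G] (A B : Finset G) (τ : G → G)

theorem sum_Icc_card_popSum_eq_sum_min (t : ℕ) :
    ∑ i ∈ Icc 1 t, #(popSum A B i) = ∑ g ∈ A + B, min t (rAB A B g) :=
  (A + B).sum_Icc_card_filter_le_eq_sum_min (rAB A B) t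

theorem restrictedSumset_subset_add : restrictedSumset A B τ ⊆ A + B := by
  simp only [restrictedSumset, image_subset_iff, mem_filter, mem_product]
  exact fun p hp => add_mem_add hp.1.1 hp.1.2

theorem rAB_le_card_filter_of_notMem_restrictedSumset {g : G}
    (hg : g ∉ restrictedSumset A B τ) :
    rAB A B g ≤ #{p ∈ {p ∈ A ×ˢ B | τ p.1 = p.2} | p.1 + p.2 = g} := by
  refine card_le_card fun p hp => ?_
  rw [mem_filter] at hp ⊢
  refine ⟨mem_filter.2 ⟨hp.1, ?_⟩, hp.2⟩
  by_contra hne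
  exact hg (mem_image.2 ⟨p, mem_filter.2 ⟨hp.1, Ne.symm hne⟩, hp.2⟩)

theorem card_filter_eq_sum_card_fiber_add :
    #{p ∈ A ×ˢ B | τ p.1 = p.2} =
      ∑ g ∈ A + B, #{p ∈ {p ∈ A ×ˢ B | τ p.1 = p.2} | p.1 + p.2 = g} :=
  card_eq_sum_card_fiberwise fun _ hp =>
    add_mem_add (mem_product.1 (mem_filter.1 hp).1).1 (mem_product.1 (mem_filter.1 hp).1).2

end RestrictedSumset

theorem restricted_sumset_popSum_bound_general {G : Type*} [AddCommGroup G]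
    [DecidableEq G] (t : ℕ) (A B : Finset G) (τ : G → G) :
    (∑ i ∈ Finset.Icc 1 t, (popSum A B i).card) ≤
      t * (restrictedSumset A B τ).card +
        ((A ×ˢ B).filter (fun p => τ p.1 = p.2)).card := by
  set RS := restrictedSumset A B τ
  set fiber : G → ℕ := fun g => #{p ∈ {p ∈ A ×ˢ B | τ p.1 = p.2} | p.1 + p.2 = g}
  have pointwise (g : G) : min t (rAB A B g) ≤ (if g ∈ RS then t else 0) + fiber g := by
    split_ifs with hg
    · exact (min_le_left _ _).trans (Nat.le_add_right _ _)
    · rw [zero_add]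
      exact (min_le_right _ _).trans (rAB_le_card_filter_of_notMem_restrictedSumset A B τ hg)
  rw [sum_Icc_card_popSum_eq_sum_min, card_filter_eq_sum_card_fiber_add]
  calc ∑ g ∈ A + B, min t (rAB A B g)
      ≤ ∑ g ∈ A + B, ((if g ∈ RS then t else 0) + fiber g) :=
        sum_le_sum fun g _ => pointwise g
    _ = t * #RS + ∑ g ∈ A + B, fiber g := by
      rw [sum_add_distrib, sum_ite_mem, inter_eq_right.2 (restrictedSumset_subset_add A B τ),
        sum_const, smul_eq_mul, mul_comm]

/-- `t|A +^τ B| + |τ| ≥ Σ_{i=1}^t |A +_i B|`, where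
`|τ| = |{(a,b) ∈ A × B : τ(a) = b}|`. -/
theorem restricted_sumset_popSum_bound {G : Type*} [AddCommGroup G] [Fintype G]
    [DecidableEq G] (t : ℕ) (ht : 1 ≤ t) (A B : Finset G)
    (hcard : Fintype.card G + 1 ≤ A.card + B.card) (τ : G → G) :
    (∑ i ∈ Finset.Icc 1 t, (popSum A B i).card) ≤
      t * (restrictedSumset A B τ).card +
        ((A ×ˢ B).filter (fun p => τ p.1 = p.2)).card :=
  restricted_sumset_popSum_bound_general t A B τ
end

section
/- Let H be a finite subgroup of an abelian group G, and let A', B' be finite subsets of G such that A' + B' is H-periodic (H + A' + B' = A' + B'). Let ρ := |(A'+H)\A'| + |(B'+H)\B'|. Then every g ∈ A' + B' satisfies r_{A',B'}(g) ≥ |H| - ρ, i.e. every element of A' + B' has at least |H| - ρ representations. -/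
open Finset
open scoped Pointwise

/-- If `A' + B'` is `H`-periodic for a finite subgroup `H`, then every
`g ∈ A' + B'` has at least `|H| - ρ` representations, where
`ρ = |(A'+H)\A'| + |(B'+H)\B'|`. -/
theorem rep_lower_bound_of_periodic {G : Type*} [AddCommGroup G] [DecidableEq G]
    (H : AddSubgroup G) [Fintype H] (Hf : Finset G) (hHf : ↑Hf = (H : Set G))
    (A' B' : Finset G) (hper : (A' + B') + Hf = A' + B')
    (ρ : ℕ) (hρ : ρ = ((A' + Hf) \ A').card + ((B' + Hf) \ B').card)
    (g : G) (hg : g ∈ A' + B') :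
    (Hf.card : ℤ) - ρ ≤ (rAB A' B' g : ℤ) := by
  classical
  obtain ⟨a, ha, b, hb, hab⟩ := mem_add.mp hg
  have hneg : ∀ h ∈ Hf, -h ∈ Hf := by
    intro h hh
    have h1 : h ∈ (H : Set G) := by rw [← hHf]; exact_mod_cast hh
    have h2 : -h ∈ (H : Set G) := H.neg_mem h1
    rw [← hHf] at h2; exact_mod_cast h2
  set S := (A' ×ˢ B').filter (fun p => p.1 + p.2 = g) with hS
  set T₁ := ((A' + Hf) \ A').image (fun x => (x, g - x)) with hT₁
  set T₂ := ((B' + Hf) \ B').image (fun y => (g - y, y)) with hT₂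
  have hsub : Hf.image (fun h => (a + h, b - h)) ⊆ S ∪ T₁ ∪ T₂ := by
    intro p hp
    obtain ⟨h, hh, rfl⟩ := mem_image.mp hp
    by_cases h1 : a + h ∈ A'
    · by_cases h2 : b - h ∈ B'
      · refine mem_union_left _ (mem_union_left _ ?_)
        refine mem_filter.mpr ⟨mem_product.mpr ⟨h1, h2⟩, ?_⟩
        show a + h + (b - h) = g
        rw [← hab]; abel
      · refine mem_union_right _ ?_
        refine mem_image.mpr ⟨b - h, mem_sdiff.mpr ⟨?_, h2⟩, ?_⟩
        · exact mem_add.mpr ⟨b, hb, -h, hneg h hh, by abel⟩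
        · have : g - (b - h) = a + h := by rw [← hab]; abel
          simp [this]
    · refine mem_union_left _ (mem_union_right _ ?_)
      refine mem_image.mpr ⟨a + h, mem_sdiff.mpr ⟨?_, h1⟩, ?_⟩
      · exact mem_add.mpr ⟨a, ha, h, hh, rfl⟩
      · have : g - (a + h) = b - h := by rw [← hab]; abel
        simp [this]
  have hinj : Set.InjOn (fun h : G => (a + h, b - h)) Hf := by
    intro x _ y _ hxy
    have := congrArg Prod.fst hxy
    simpa using this
  have hcard : Hf.card = (Hf.image (fun h => (a + h, b - h))).card :=
    (card_image_of_injOn hinj).symm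
  have h1 : (Hf.image (fun h => (a + h, b - h))).card ≤ S.card + T₁.card + T₂.card :=
    le_trans (card_le_card hsub) (le_trans (card_union_le _ _)
      (by gcongr; exact card_union_le _ _))
  have hT1 : T₁.card ≤ ((A' + Hf) \ A').card := card_image_le
  have hT2 : T₂.card ≤ ((B' + Hf) \ B').card := card_image_le
  have : Hf.card ≤ rAB A' B' g + ρ := by
    rw [hρ]; unfold rAB; rw [← hS]; omega
  push_cast
  omega
end
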